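/- (Contiguity: down shift with respect to e_{n+1}.) Fix k with 1 ≤ k ≤ n. Then at every point x with all coordinates positive, applying the operator S₁ = Σ_{i≠k} (x_{1i}x_{2k} − x_{1k}x_{2i})·∂/∂x_{2i} + (Σ_{i=1}^n α_i)·x_{1k} to the function x ↦ ∂Φ(α, δ+1; x)/∂x_{2k} yields α_k·(Σ_{i=1}^n α_i − δ)·Φ(α,δ;x) − α_k·[g(t,x)]_{t=a}^{t=b}. -/

import Mathlib

open Complex Function

/-- Partial derivative of `f` with respect to the coordinate `p`. -/
noncomputable def pd {n : ℕ} (p : Fin 2 × Fin n)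
    (f : ((Fin 2 × Fin n) → ℝ) → ℂ) (x : (Fin 2 × Fin n) → ℝ) : ℂ :=
  deriv (fun s : ℝ => f (Function.update x p s)) (x p)

/-- `Φ(α,δ;x) = ∫_a^b t^(−δ−1) ∏ₖ (x_{1k} + x_{2k} t)^{α_k} dt`; the first row
of `x` is indexed by `0 : Fin 2`, the second row by `1 : Fin 2`. -/
noncomputable def Phi {n : ℕ} (α : Fin n → ℂ) (δ : ℂ) (a b : ℝ)
    (x : (Fin 2 × Fin n) → ℝ) : ℂ :=
  ∫ t in a..b, (t : ℂ) ^ (-δ - 1)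
    * ∏ k, ((x (0, k) : ℂ) + (x (1, k) : ℂ) * (t : ℂ)) ^ (α k)

/-- `g(t,x) = t^(−δ) ∏ₖ (x_{1k} + x_{2k} t)^{α_k}`. -/
noncomputable def gfun {n : ℕ} (α : Fin n → ℂ) (δ : ℂ) (t : ℝ)
    (x : (Fin 2 × Fin n) → ℝ) : ℂ :=
  (t : ℂ) ^ (-δ) * ∏ k, ((x (0, k) : ℂ) + (x (1, k) : ℂ) * (t : ℂ)) ^ (α k)

/-!
Differentiating under the integral sign gives `∂Φ(β, γ)/∂x_{2i} = β_i Φ(β − e_i, γ − 1)`, so the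
left-hand side is `α_k` times a combination of `Φ(α − e_k − e_i, δ − 1)` and `Φ(α − e_k, δ)`.
Splitting off the factor `x_{1j} + x_{2j} t` of the integrand gives the contiguity relation
`Φ(β, γ) = x_{1j} Φ(β − e_j, γ) + x_{2j} Φ(β − e_j, γ − 1)`. Used twice, it turns
`(x_{1i} x_{2k} − x_{1k} x_{2i}) Φ(α − e_k − e_i, δ − 1)` into `x_{1i} Φ(α − e_i, δ) − x_{1k} Φ(α − e_k, δ)`,
and the left-hand side collapses to `α_k Σ_j α_j x_{1j} Φ(α − e_j, δ)`. On the right, the boundary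
term is `∫ g'` with `g' = −δ t^{−δ−1} ∏ u_l^{α_l} + Σ_j α_j x_{2j} t^{−δ} ∏ u_l^{α_l − [l = j]}`
(`u_l = x_{1l} + x_{2l} t`), and the contiguity relation collapses it to the same sum.
-/

open MeasureTheory Filter Topology Finset
open scoped Interval

section ParametricIntegral

variable {E : Type*} [NormedAddCommGroup E] [NormedSpace ℝ E]

theorem hasDerivAt_intervalIntegral_of_continuousOn {F F' : ℝ → ℝ → E} {s₀ a b : ℝ}
    {U : Set ℝ} (hU : U ∈ 𝓝 s₀) (hF : ∀ s ∈ U, ContinuousOn (F s) [[a, b]])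
    (hF' : ContinuousOn (uncurry F') (U ×ˢ [[a, b]]))
    (hderiv : ∀ s ∈ U, ∀ t ∈ [[a, b]], HasDerivAt (F · t) (F' s t) s) :
    HasDerivAt (fun s => ∫ t in a..b, F s t) (∫ t in a..b, F' s₀ t) s₀ := by
  have hs₀ : s₀ ∈ U := mem_of_mem_nhds hU
  obtain ⟨ε, hε, hεU⟩ := Metric.nhds_basis_closedBall.mem_iff.1 hU
  have hballU : Metric.ball s₀ ε ⊆ U := Metric.ball_subset_closedBall.trans hεU
  obtain ⟨C, hC⟩ := ((isCompact_closedBall s₀ ε).prod isCompact_uIcc).exists_bound_of_continuousOn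
    (hF'.mono (Set.prod_mono hεU subset_rfl))
  have hF's₀ : ContinuousOn (F' s₀) [[a, b]] :=
    hF'.comp (continuousOn_const.prodMk continuousOn_id) fun t ht => ⟨hs₀, ht⟩
  refine (intervalIntegral.hasDerivAt_integral_of_dominated_loc_of_deriv_le (bound := fun _ => C)
    (Metric.ball_mem_nhds s₀ hε) ?_ (hF s₀ hs₀).intervalIntegrable
    ((hF's₀.mono Set.uIoc_subset_uIcc).aestronglyMeasurable measurableSet_uIoc) ?_
    intervalIntegrable_const ?_).2
  · filter_upwards [hU] with s hs
    exact ((hF s hs).mono Set.uIoc_subset_uIcc).aestronglyMeasurable measurableSet_uIoc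
  · exact Eventually.of_forall fun t ht s hs =>
      hC (s, t) ⟨Metric.ball_subset_closedBall hs, Set.uIoc_subset_uIcc ht⟩
  · exact Eventually.of_forall fun t ht s hs => hderiv s (hballU hs) t (Set.uIoc_subset_uIcc ht)

end ParametricIntegral

section CpowProduct

variable {ι : Type*} [Fintype ι] [DecidableEq ι]

theorem prod_cpow_sub_single (w β : ι → ℂ) (j : ι) :
    ∏ l, w l ^ (β - Pi.single j 1 : ι → ℂ) l = w j ^ (β j - 1) * ∏ l ∈ univ.erase j, w l ^ β l := by
  rw [← mul_prod_erase univ _ (mem_univ j)]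
  congr 1
  · simp
  · exact prod_congr rfl fun l hl => by simp [ne_of_mem_erase hl]

theorem mul_prod_cpow_sub_single {w : ι → ℂ} (β : ι → ℂ) {j : ι} (hw : w j ≠ 0) :
    w j * ∏ l, w l ^ (β - Pi.single j 1 : ι → ℂ) l = ∏ l, w l ^ β l := by
  rw [prod_cpow_sub_single, ← mul_prod_erase univ _ (mem_univ j), cpow_sub _ _ hw, cpow_one]
  field_simp

theorem HasDerivAt.prod_cpow_const {v : ι → ℝ → ℂ} {v' : ι → ℂ} {r : ℝ} (β : ι → ℂ)
    (hv : ∀ j, HasDerivAt (v j) (v' j) r) (hslit : ∀ j, v j r ∈ slitPlane) :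
    HasDerivAt (fun r => ∏ j, v j r ^ β j)
      (∑ j, β j * v' j * ∏ l, v l r ^ (β - Pi.single j 1 : ι → ℂ) l) r := by
  refine (HasDerivAt.fun_finsetProd (u := univ) fun j _ =>
    (hasStrictDerivAt_cpow_const (c := β j) (hslit j)).hasDerivAt.comp r (hv j)).congr_deriv
    (sum_congr rfl fun j _ => ?_)
  simp only [prod_cpow_sub_single, comp_apply, smul_eq_mul]
  ring

end CpowProduct

theorem update_pos {ι : Type*} [DecidableEq ι] {x : ι → ℝ} (hx : ∀ p, 0 < x p) (q : ι) {s : ℝ}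
    (hs : 0 < s) (p : ι) : 0 < update x q s p := by
  rcases eq_or_ne p q with rfl | h
  · simpa
  · simpa [h] using hx p

section Phi

variable {n : ℕ} {x : (Fin 2 × Fin n) → ℝ} {a b t : ℝ}

theorem coord_add_mul_mem_slitPlane (hx : ∀ p, 0 < x p) (k : Fin n) (ht : 0 < t) :
    (x (0, k) : ℂ) + x (1, k) * t ∈ slitPlane := by
  rw [← ofReal_mul, ← ofReal_add]
  exact ofReal_mem_slitPlane.2 (by have := hx (0, k); have := hx (1, k); positivity)

noncomputable def phiIntegrand (β : Fin n → ℂ) (γ : ℂ) (x : (Fin 2 × Fin n) → ℝ) (t : ℝ) : ℂ :=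
  (t : ℂ) ^ (-γ - 1) * ∏ k, ((x (0, k) : ℂ) + (x (1, k) : ℂ) * (t : ℂ)) ^ (β k)

theorem Phi_eq_integral_phiIntegrand (β : Fin n → ℂ) (γ : ℂ) :
    Phi β γ a b x = ∫ t in a..b, phiIntegrand β γ x t :=
  rfl

theorem phiIntegrand_sub_one (β : Fin n → ℂ) (γ : ℂ) (ht : t ≠ 0) :
    phiIntegrand β (γ - 1) x t = t * phiIntegrand β γ x t := by
  rw [phiIntegrand, phiIntegrand, show -(γ - 1) - 1 = (-γ - 1) + 1 by ring,
    cpow_add _ _ (ofReal_ne_zero.2 ht), cpow_one]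
  ring

theorem phiIntegrand_eq_add_sub_single (β : Fin n → ℂ) (γ : ℂ) (j : Fin n) (hx : ∀ p, 0 < x p)
    (ht : 0 < t) :
    phiIntegrand β γ x t = x (0, j) * phiIntegrand (β - Pi.single j 1) γ x t
      + x (1, j) * phiIntegrand (β - Pi.single j 1) (γ - 1) x t := by
  rw [phiIntegrand_sub_one _ _ ht.ne', phiIntegrand, phiIntegrand,
    ← mul_prod_cpow_sub_single (w := fun k => (x (0, k) : ℂ) + x (1, k) * t) β
      (slitPlane_ne_zero (coord_add_mul_mem_slitPlane hx j ht))]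
  ring

theorem continuousAt_phiIntegrand (β : Fin n → ℂ) (γ : ℂ) (hx : ∀ p, 0 < x p) (ht : 0 < t) :
    ContinuousAt (fun p : ((Fin 2 × Fin n) → ℝ) × ℝ => phiIntegrand β γ p.1 p.2) (x, t) := by
  refine ContinuousAt.mul ?_ (tendsto_finsetProd _ fun k _ => ?_)
  · exact (continuous_ofReal.continuousAt.comp continuousAt_snd).cpow continuousAt_const
      (ofReal_mem_slitPlane.2 ht)
  · exact ContinuousAt.cpow (by fun_prop) continuousAt_const (coord_add_mul_mem_slitPlane hx k ht)

theorem continuousOn_phiIntegrand (β : Fin n → ℂ) (γ : ℂ) (ha : 0 < a) (hb : 0 < b)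
    (hx : ∀ p, 0 < x p) : ContinuousOn (phiIntegrand β γ x) [[a, b]] := fun _ ht =>
  ((continuousAt_phiIntegrand β γ hx (lt_min ha hb |>.trans_le ht.1)).comp
    (continuousAt_const.prodMk continuousAt_id)).continuousWithinAt

theorem intervalIntegrable_phiIntegrand (β : Fin n → ℂ) (γ : ℂ) (ha : 0 < a) (hb : 0 < b)
    (hx : ∀ p, 0 < x p) : IntervalIntegrable (phiIntegrand β γ x) volume a b :=
  (continuousOn_phiIntegrand β γ ha hb hx).intervalIntegrable

theorem hasDerivAt_phiIntegrand_update (β : Fin n → ℂ) (γ : ℂ) (i : Fin n) (hx : ∀ p, 0 < x p)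
    (ht : 0 < t) :
    HasDerivAt (fun s => phiIntegrand β γ (update x (1, i) s) t)
      (β i * phiIntegrand (β - Pi.single i 1) (γ - 1) x t) (x (1, i)) := by
  have hcoord (q : Fin 2 × Fin n) : HasDerivAt (fun s => update x (1, i) s q)
      (Pi.single (M := fun _ => ℝ) ((1 : Fin 2), i) 1 q) (x (1, i)) :=
    hasDerivAt_pi.1 (hasDerivAt_update x (1, i) _) q
  refine ((hasDerivAt_const (x (1, i)) ((t : ℂ) ^ (-γ - 1))).fun_mul
    (HasDerivAt.prod_cpow_const β
      (fun k => (hcoord (0, k)).ofReal_comp.fun_add ((hcoord (1, k)).ofReal_comp.mul_const (t : ℂ)))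
      (fun k => by rw [update_eq_self]; exact coord_add_mul_mem_slitPlane hx k ht))).congr_deriv ?_
  rw [phiIntegrand_sub_one _ _ ht.ne', Fintype.sum_eq_single i (fun j hj => by simp [hj])]
  simp only [update_eq_self, Pi.single_apply, Prod.mk.injEq, zero_ne_one, if_false,
    and_true, if_true, ofReal_zero, ofReal_one, zero_add, one_mul, zero_mul, phiIntegrand]
  ring

theorem hasDerivAt_Phi_update (β : Fin n → ℂ) (γ : ℂ) (i : Fin n) (ha : 0 < a) (hb : 0 < b)
    (hx : ∀ p, 0 < x p) :
    HasDerivAt (fun s => Phi β γ a b (update x (1, i) s))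
      (β i * Phi (β - Pi.single i 1) (γ - 1) a b x) (x (1, i)) := by
  have hpos : ∀ t ∈ [[a, b]], 0 < t := fun t ht => (lt_min ha hb).trans_le ht.1
  have key := hasDerivAt_intervalIntegral_of_continuousOn
    (F := fun s t => phiIntegrand β γ (update x (1, i) s) t)
    (F' := fun s t => β i * phiIntegrand (β - Pi.single i 1) (γ - 1) (update x (1, i) s) t)
    (Ioi_mem_nhds (hx (1, i)))
    (fun s hs => continuousOn_phiIntegrand β γ ha hb (update_pos hx _ hs))
    (fun p hp => ?_) (fun s hs t ht => ?_)
  · simpa [Phi_eq_integral_phiIntegrand, intervalIntegral.integral_const_mul] using key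
  · refine (continuousAt_const.mul
      ((continuousAt_phiIntegrand _ _ (update_pos hx _ hp.1) (hpos _ hp.2)).comp
        (f := fun p : ℝ × ℝ => (update x (1, i) p.1, p.2))
        ((continuous_const.update (1, i) continuous_fst).prodMk continuous_snd).continuousAt))
      |>.continuousWithinAt
  · have h := hasDerivAt_phiIntegrand_update β γ i (update_pos hx (1, i) hs) (hpos t ht)
    simp only [update_idem, update_self] at h
    exact h

theorem pd_Phi (β : Fin n → ℂ) (γ : ℂ) (i : Fin n) (ha : 0 < a) (hb : 0 < b)
    (hx : ∀ p, 0 < x p) :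
    pd (1, i) (Phi β γ a b) x = β i * Phi (β - Pi.single i 1) (γ - 1) a b x :=
  (hasDerivAt_Phi_update β γ i ha hb hx).deriv

theorem pd_congr_of_forall_pos {f g : ((Fin 2 × Fin n) → ℝ) → ℂ} (q : Fin 2 × Fin n)
    (hfg : ∀ y, (∀ p, 0 < y p) → f y = g y) (hx : ∀ p, 0 < x p) : pd q f x = pd q g x :=
  EventuallyEq.deriv_eq <| (eventually_gt_nhds (hx q)).mono fun _ hs =>
    hfg _ (update_pos hx q hs)

theorem pd_const_mul (q : Fin 2 × Fin n) (c : ℂ) (f : ((Fin 2 × Fin n) → ℝ) → ℂ) :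
    pd q (fun y => c * f y) x = c * pd q f x :=
  congrFun (deriv_const_mul_field' c) _

theorem Phi_eq_add_sub_single (β : Fin n → ℂ) (γ : ℂ) (j : Fin n) (ha : 0 < a) (hb : 0 < b)
    (hx : ∀ p, 0 < x p) :
    Phi β γ a b x = x (0, j) * Phi (β - Pi.single j 1) γ a b x
      + x (1, j) * Phi (β - Pi.single j 1) (γ - 1) a b x := by
  simp only [Phi_eq_integral_phiIntegrand, ← intervalIntegral.integral_const_mul]
  rw [← intervalIntegral.integral_add
    ((intervalIntegrable_phiIntegrand _ _ ha hb hx).const_mul _)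
    ((intervalIntegrable_phiIntegrand _ _ ha hb hx).const_mul _)]
  exact intervalIntegral.integral_congr fun t ht =>
    phiIntegrand_eq_add_sub_single β γ j hx ((lt_min ha hb).trans_le ht.1)

theorem minor_mul_Phi_sub_single_sub_single (β : Fin n → ℂ) (γ : ℂ) (i k : Fin n)
    (ha : 0 < a) (hb : 0 < b) (hx : ∀ p, 0 < x p) :
    ((x (0, i) * x (1, k) - x (0, k) * x (1, i) : ℝ) : ℂ)
        * Phi (β - Pi.single k 1 - Pi.single i 1) (γ - 1) a b x
      = x (0, i) * Phi (β - Pi.single i 1) γ a b x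
        - x (0, k) * Phi (β - Pi.single k 1) γ a b x := by
  have hk := Phi_eq_add_sub_single (β - Pi.single k 1) γ i ha hb hx
  have hi := Phi_eq_add_sub_single (β - Pi.single i 1) γ k ha hb hx
  rw [sub_right_comm] at hi
  push_cast
  linear_combination x (0, k) * hk - x (0, i) * hi

theorem hasDerivAt_gfun (α : Fin n → ℂ) (δ : ℂ) (hx : ∀ p, 0 < x p) (ht : 0 < t) :
    HasDerivAt (fun t => gfun α δ t x)
      (-δ * phiIntegrand α δ x t
        + ∑ j, α j * x (1, j) * phiIntegrand (α - Pi.single j 1) (δ - 1) x t) t := by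
  have hpow := (hasStrictDerivAt_cpow_const (c := -δ)
    (ofReal_mem_slitPlane.2 ht)).hasDerivAt.comp_ofReal
  have hlin (j : Fin n) := (((hasDerivAt_id (t : ℂ)).const_mul (x (1, j) : ℂ)).const_add
    (x (0, j) : ℂ)).comp_ofReal
  refine (hpow.fun_mul (HasDerivAt.prod_cpow_const α hlin fun j =>
    coord_add_mul_mem_slitPlane hx j ht)).congr_deriv ?_
  simp only [phiIntegrand, neg_sub, sub_sub_cancel_left, id, mul_one, mul_sum]
  congr 1
  · ring
  · exact sum_congr rfl fun j _ => by ring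

theorem gfun_sub_gfun (α : Fin n → ℂ) (δ : ℂ) (ha : 0 < a) (hb : 0 < b) (hx : ∀ p, 0 < x p) :
    gfun α δ b x - gfun α δ a x
      = -δ * Phi α δ a b x + ∑ j, α j * x (1, j) * Phi (α - Pi.single j 1) (δ - 1) a b x := by
  have hint (β : Fin n → ℂ) (γ : ℂ) := intervalIntegrable_phiIntegrand β γ ha hb hx
  have hsum : IntervalIntegrable
      (fun t => ∑ j, α j * x (1, j) * phiIntegrand (α - Pi.single j 1) (δ - 1) x t) volume a b :=
    (continuousOn_finsetSum _ fun j _ =>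
      continuousOn_const.mul (continuousOn_phiIntegrand _ _ ha hb hx)).intervalIntegrable
  rw [← intervalIntegral.integral_eq_sub_of_hasDerivAt
      (fun t ht => hasDerivAt_gfun α δ hx ((lt_min ha hb).trans_le ht.1))
      (((hint _ _).const_mul _).add hsum),
    intervalIntegral.integral_add ((hint _ _).const_mul _) hsum,
    intervalIntegral.integral_finsetSum fun j _ => (hint _ _).const_mul _]
  simp only [intervalIntegral.integral_const_mul, Phi_eq_integral_phiIntegrand]

end Phi
theorem stmt17_general {n : ℕ} (α : Fin n → ℂ) (δ : ℂ) (a b : ℝ)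
    (ha : 0 < a) (hab : a < b)
    (k : Fin n) (x : (Fin 2 × Fin n) → ℝ) (hx : ∀ p, 0 < x p) :
    ∑ i ∈ Finset.univ \ {k},
        ((x (0, i) * x (1, k) - x (0, k) * x (1, i) : ℝ) : ℂ)
          * pd (1, i) (pd (1, k) (Phi α (δ + 1) a b)) x
      + (∑ i, α i) * (x (0, k) : ℂ) * pd (1, k) (Phi α (δ + 1) a b) x
      = α k * ((∑ i, α i) - δ) * Phi α δ a b x
        - α k * (gfun α δ b x - gfun α δ a x) := by
  have hb : 0 < b := ha.trans hab
  rw [sdiff_singleton_eq_erase]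
  have hpd {y : (Fin 2 × Fin n) → ℝ} (hy : ∀ p, 0 < y p) :
      pd (1, k) (Phi α (δ + 1) a b) y = α k * Phi (α - Pi.single k 1) δ a b y := by
    simpa using pd_Phi α (δ + 1) k ha hb hy
  have hpd2 (i : Fin n) (hi : i ∈ univ.erase k) : pd (1, i) (pd (1, k) (Phi α (δ + 1) a b)) x
      = α k * (α i * Phi (α - Pi.single k 1 - Pi.single i 1) (δ - 1) a b x) := by
    rw [pd_congr_of_forall_pos _ (fun y hy => hpd hy) hx, pd_const_mul, pd_Phi _ _ i ha hb hx]
    simp [Pi.single_eq_of_ne (ne_of_mem_erase hi)]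
  have hminor (i : Fin n) :
      ((x (0, i) * x (1, k) - x (0, k) * x (1, i) : ℝ) : ℂ)
          * (α k * (α i * Phi (α - Pi.single k 1 - Pi.single i 1) (δ - 1) a b x))
        = α k * (α i * (x (0, i) * Phi (α - Pi.single i 1) δ a b x
            - x (0, k) * Phi (α - Pi.single k 1) δ a b x)) := by
    rw [← minor_mul_Phi_sub_single_sub_single α δ i k ha hb hx]
    ring
  have hsplit (j : Fin n) : α j * x (1, j) * Phi (α - Pi.single j 1) (δ - 1) a b x
      = α j * (Phi α δ a b x - x (0, j) * Phi (α - Pi.single j 1) δ a b x) := by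
    rw [Phi_eq_add_sub_single α δ j ha hb hx]
    ring
  rw [sum_congr rfl fun i hi => by rw [hpd2 i hi, hminor i], hpd hx,
    gfun_sub_gfun α δ ha hb hx, sum_congr rfl fun j _ => hsplit j]
  simp only [mul_sub, sum_sub_distrib, ← mul_sum, ← sum_mul]
  rw [← add_sum_erase univ α (mem_univ k), ← add_sum_erase univ _ (mem_univ k)]
  ring

/-- down shift with respect to `e_{n+1}`: applying
`S₁ = Σ_{i≠k} (x_{1i}x_{2k} − x_{1k}x_{2i})·∂_{2i} + (Σᵢ α_i)·x_{1k}` to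
`x ↦ ∂Φ(α,δ+1;x)/∂x_{2k}` yields
`α_k·(Σᵢ α_i − δ)·Φ(α,δ;x) − α_k·[g(t,x)]_{t=a}^{t=b}`. -/
theorem stmt17 {n : ℕ} (hn : 1 ≤ n) (α : Fin n → ℂ) (δ : ℂ) (a b : ℝ)
    (ha : 0 < a) (hab : a < b) (hδ : 0 < (-δ - 2).re) (hα : ∀ k, 0 < (α k).re)
    (k : Fin n) (x : (Fin 2 × Fin n) → ℝ) (hx : ∀ p, 0 < x p) :
    ∑ i ∈ Finset.univ \ {k},
        ((x (0, i) * x (1, k) - x (0, k) * x (1, i) : ℝ) : ℂ)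
          * pd (1, i) (pd (1, k) (Phi α (δ + 1) a b)) x
      + (∑ i, α i) * (x (0, k) : ℂ) * pd (1, k) (Phi α (δ + 1) a b) x
      = α k * ((∑ i, α i) - δ) * Phi α δ a b x
        - α k * (gfun α δ b x - gfun α δ a x) :=
  stmt17_general α δ a b ha hab k x hx
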